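/- arXiv:2602.11822 — 3 statements merged into one kernel-verified Lean document; each statement's English description precedes it below -/
import Mathlib

section
/- (Quadratic form of the undirected signed matrix-weighted Laplacian.) Let A_{ij} be a signed matrix-weight assignment on N vertices that is undirected, i.e., A_{ij} = A_{ji} for all i ≠ j, and let sgn(A_{ij}) ∈ {1, 0, −1} be 1 if A_{ij} is positive semidefinite and nonzero, 0 if A_{ij} = 0, and −1 if A_{ij} is negative semidefinite and nonzero. Then for every x = (x_1,…,x_N) ∈ ℝ^{Nd}, xᵀ L x = (1/2) Σ_{i≠j} (x_i − sgn(A_{ij}) x_j)ᵀ |A_{ij}| (x_i − sgn(A_{ij}) x_j). In particular, L is symmetric positive semidefinite. -/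
open Matrix Filter
open scoped Classical

/-- `|Q|` for a real symmetric matrix that is positive semidefinite or negative
semidefinite: it equals `Q` in the first case and `-Q` in the second. -/
noncomputable def absM {d : ℕ} (Q : Matrix (Fin d) (Fin d) ℝ) : Matrix (Fin d) (Fin d) ℝ :=
  if Q.PosSemidef then Q else -Q

/-- A signed matrix-weight assignment: for `i ≠ j`, each weight `A i j` is symmetric
and either positive semidefinite or negative semidefinite. -/
def SignedWeights {N d : ℕ} (A : Fin N → Fin N → Matrix (Fin d) (Fin d) ℝ) : Prop :=
  ∀ i j : Fin N, i ≠ j → (A i j).IsSymm ∧ ((A i j).PosSemidef ∨ (-(A i j)).PosSemidef)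

/-- The signed matrix-weighted Laplacian: `(i,j)` block `−A_{ij}` for `j ≠ i`, and
`(i,i)` block `Σ_{k≠i}|A_{ik}|`. -/
noncomputable def Lap {N d : ℕ} (A : Fin N → Fin N → Matrix (Fin d) (Fin d) ℝ) :
    Matrix (Fin N × Fin d) (Fin N × Fin d) ℝ :=
  fun p q =>
    if p.1 = q.1 then (∑ k ∈ Finset.univ.erase p.1, absM (A p.1 k)) p.2 q.2
    else (-(A p.1 q.1)) p.2 q.2

/-- The block-diagonal `Nd × Nd` matrix with `d × d` diagonal blocks `D 1, …, D N`. -/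
def blockDiag' {N d : ℕ} (D : Fin N → Matrix (Fin d) (Fin d) ℝ) :
    Matrix (Fin N × Fin d) (Fin N × Fin d) ℝ :=
  fun p q => if p.1 = q.1 then D p.1 p.2 q.2 else 0

/-- Matrix-weighted in-degree `Σ_{k∈N_i}|A_{ik}|` of vertex `i`
(weights `A i k = 0` contribute nothing). -/
noncomputable def inDeg {N d : ℕ} (A : Fin N → Fin N → Matrix (Fin d) (Fin d) ℝ)
    (i : Fin N) : Matrix (Fin d) (Fin d) ℝ :=
  ∑ k ∈ Finset.univ.erase i, absM (A i k)

/-- Matrix-weighted out-degree `Σ_{k∈N'_i}|A_{ki}|` of vertex `i`. -/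
noncomputable def outDeg {N d : ℕ} (A : Fin N → Fin N → Matrix (Fin d) (Fin d) ℝ)
    (i : Fin N) : Matrix (Fin d) (Fin d) ℝ :=
  ∑ k ∈ Finset.univ.erase i, absM (A k i)

/-- A positive–negative path from `i` to `j`: a sequence `i = p 0, …, p m = j` with
`m ≥ 1` in which every traversed weight `A_{p(s+1), p(s)}` is positive or negative
definite. -/
def PNPath {N d : ℕ} (A : Fin N → Fin N → Matrix (Fin d) (Fin d) ℝ) (i j : Fin N) : Prop :=
  ∃ m : ℕ, 0 < m ∧ ∃ p : Fin (m + 1) → Fin N, p 0 = i ∧ p (Fin.last m) = j ∧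
    ∀ s : Fin m, (A (p s.succ) (p s.castSucc)).PosDef ∨ (-(A (p s.succ) (p s.castSucc))).PosDef

/-- Vertex `j` is in-degree-dominated. -/
def InDegDom {N d : ℕ} (A : Fin N → Fin N → Matrix (Fin d) (Fin d) ℝ) (j : Fin N) : Prop :=
  (inDeg A j - outDeg A j).PosSemidef

/-- Assumption 1: `{1,…,N} = V1 ∪ V2` disjointly, every `j ∈ V2` is reached from some
`i ∈ V1` by a positive–negative path, and every `j ∈ V2` is in-degree-dominated. -/
def Assumption1 {N d : ℕ} (A : Fin N → Fin N → Matrix (Fin d) (Fin d) ℝ)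
    (V1 V2 : Finset (Fin N)) : Prop :=
  V1 ∪ V2 = Finset.univ ∧ V1 ∩ V2 = ∅ ∧
    (∀ j ∈ V2, ∃ i ∈ V1, PNPath A i j) ∧ (∀ j ∈ V2, InDegDom A j)

/-- `Ω_i`: the set of (other) vertices `j` with `A_{ij}` negative semidefinite and nonzero. -/
noncomputable def OmegaSet {N d : ℕ} (A : Fin N → Fin N → Matrix (Fin d) (Fin d) ℝ)
    (i : Fin N) : Finset (Fin N) :=
  (Finset.univ.erase i).filter fun j => (-(A i j)).PosSemidef ∧ A i j ≠ 0

/-- The scalar sign of a signed matrix weight: `1` if positive semidefinite and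
nonzero, `0` if zero, `−1` if negative semidefinite and nonzero. -/
noncomputable def sgnM {d : ℕ} (Q : Matrix (Fin d) (Fin d) ℝ) : ℝ :=
  if Q = 0 then 0 else if Q.PosSemidef then 1 else -1

/-! Split `x` into blocks `y i`. The Laplacian form is
`Σ_{i ≠ j} (y iᵀ |A_ij| y i − y iᵀ A_ij y j)`, and since `A_ij = s |A_ij|` and `s² |A_ij| = |A_ij|`
for `s = sgn(A_ij)`, each edge term expands as
`(y i − s y j)ᵀ |A_ij| (y i − s y j) = y iᵀ |A_ij| y i + y jᵀ |A_ij| y j − 2 y iᵀ A_ij y j`.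
Undirectedness makes the sums of the first two terms over ordered pairs equal, which gives the
factor `1/2`. Each edge term is nonnegative because `|A_ij|` is positive semidefinite. -/

lemma dotProduct_mulVec_eq_sum_blocks {R ι κ : Type*} [CommSemiring R] [Fintype ι]
    [Fintype κ] (M : Matrix (ι × κ) (ι × κ) R) (x : ι × κ → R) :
    x ⬝ᵥ M *ᵥ x =
      ∑ i, ∑ j, (fun a => x (i, a)) ⬝ᵥ (of fun a b => M (i, a) (j, b)) *ᵥ fun b => x (j, b) := by
  simp only [dotProduct, mulVec, of_apply, Fintype.sum_prod_type, Finset.mul_sum]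
  exact Finset.sum_congr rfl fun i _ => Finset.sum_comm

lemma sum_sum_erase_comm {M ι : Type*} [AddCommMonoid M] [Fintype ι] [DecidableEq ι]
    (f : ι → ι → M) :
    ∑ i, ∑ j ∈ Finset.univ.erase i, f i j = ∑ i, ∑ j ∈ Finset.univ.erase i, f j i :=
  Finset.sum_comm' fun i j => by
    simp only [Finset.mem_erase, Finset.mem_univ, and_true, true_and, ne_comm]

section SignedWeight

variable {d : ℕ} {Q : Matrix (Fin d) (Fin d) ℝ}

lemma absM_posSemidef (h : Q.PosSemidef ∨ (-Q).PosSemidef) : (absM Q).PosSemidef := by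
  unfold absM
  split_ifs with hQ
  · exact hQ
  · exact h.resolve_left hQ

lemma absM_isSymm (h : Q.IsSymm) : (absM Q).IsSymm := by
  unfold absM
  split_ifs
  exacts [h, h.neg]

lemma sgnM_smul_absM : sgnM Q • absM Q = Q := by
  unfold sgnM absM
  split_ifs with h0 <;> simp [h0]

lemma sgnM_mul_self_smul_absM : (sgnM Q * sgnM Q) • absM Q = absM Q := by
  rw [mul_smul, sgnM_smul_absM]
  unfold sgnM absM
  split_ifs with h0 <;> simp [h0]

lemma dotProduct_absM_mulVec_sub_sgnM_smul (hQ : Q.IsSymm) (u v : Fin d → ℝ) :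
    (u - sgnM Q • v) ⬝ᵥ absM Q *ᵥ (u - sgnM Q • v) =
      u ⬝ᵥ absM Q *ᵥ u + v ⬝ᵥ absM Q *ᵥ v - 2 * (u ⬝ᵥ Q *ᵥ v) := by
  have hcross : v ⬝ᵥ absM Q *ᵥ u = u ⬝ᵥ absM Q *ᵥ v := by
    rw [dotProduct_mulVec, ← mulVec_transpose, (absM_isSymm hQ).eq, dotProduct_comm]
  have hQv : u ⬝ᵥ Q *ᵥ v = sgnM Q * (u ⬝ᵥ absM Q *ᵥ v) := by
    conv_lhs => rw [← sgnM_smul_absM (Q := Q)]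
    rw [smul_mulVec, dotProduct_smul, smul_eq_mul]
  have hvv : sgnM Q * sgnM Q * (v ⬝ᵥ absM Q *ᵥ v) = v ⬝ᵥ absM Q *ᵥ v := by
    conv_rhs => rw [← sgnM_mul_self_smul_absM (Q := Q)]
    rw [smul_mulVec, dotProduct_smul, smul_eq_mul]
  simp only [sub_dotProduct, dotProduct_sub, mulVec_sub, mulVec_smul, smul_dotProduct,
    dotProduct_smul, smul_eq_mul, hcross, hQv]
  linear_combination hvv

end SignedWeight

section Laplacian

variable {N d : ℕ} (A : Fin N → Fin N → Matrix (Fin d) (Fin d) ℝ)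

lemma dotProduct_lap_mulVec (x : Fin N × Fin d → ℝ) :
    x ⬝ᵥ Lap A *ᵥ x =
      ∑ i, ∑ j ∈ Finset.univ.erase i,
        ((fun a => x (i, a)) ⬝ᵥ absM (A i j) *ᵥ (fun a => x (i, a)) -
          (fun a => x (i, a)) ⬝ᵥ A i j *ᵥ fun a => x (j, a)) := by
  rw [dotProduct_mulVec_eq_sum_blocks]
  refine Finset.sum_congr rfl fun i _ => ?_
  have hdiag :
      (of fun a b => Lap A (i, a) (i, b)) = ∑ k ∈ Finset.univ.erase i, absM (A i k) := by
    ext a b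
    simp [Lap]
  have hoff : ∀ j ∈ Finset.univ.erase i,
      (fun a => x (i, a)) ⬝ᵥ (of fun a b => Lap A (i, a) (j, b)) *ᵥ (fun b => x (j, b)) =
        -((fun a => x (i, a)) ⬝ᵥ A i j *ᵥ fun b => x (j, b)) := by
    intro j hj
    have hblock : (of fun a b => Lap A (i, a) (j, b)) = -A i j := by
      ext a b
      simp [Lap, (Finset.ne_of_mem_erase hj).symm]
    rw [hblock, neg_mulVec, dotProduct_neg]
  rw [← Finset.add_sum_erase _ _ (Finset.mem_univ i), hdiag, Finset.sum_congr rfl hoff,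
    Matrix.sum_mulVec, dotProduct_sum, Finset.sum_sub_distrib, Finset.sum_neg_distrib,
    sub_eq_add_neg]

lemma lap_isSymm (hA : SignedWeights A) (hund : ∀ i j : Fin N, i ≠ j → A i j = A j i) :
    (Lap A).IsSymm := by
  refine IsSymm.ext fun p q => ?_
  by_cases h : q.1 = p.1
  · simp only [Lap, Matrix.sum_apply, h]
    refine Finset.sum_congr rfl fun k hk => ?_
    exact (absM_isSymm (hA p.1 k (Finset.ne_of_mem_erase hk).symm).1).apply p.2 q.2
  · simp only [Lap, if_neg h, if_neg (Ne.symm h), hund q.1 p.1 h]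
    exact congrArg Neg.neg ((hA p.1 q.1 (Ne.symm h)).1.apply p.2 q.2)

lemma dotProduct_lap_mulVec_eq_half_sum (hsymm : ∀ i j : Fin N, i ≠ j → (A i j).IsSymm)
    (hund : ∀ i j : Fin N, i ≠ j → A i j = A j i) (x : Fin N × Fin d → ℝ) :
    x ⬝ᵥ Lap A *ᵥ x = (1 / 2 : ℝ) * ∑ i, ∑ j ∈ Finset.univ.erase i,
      (fun a => x (i, a) - sgnM (A i j) * x (j, a)) ⬝ᵥ
        absM (A i j) *ᵥ fun a => x (i, a) - sgnM (A i j) * x (j, a) := by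
  set y : Fin N → Fin d → ℝ := fun i a => x (i, a)
  have hedge : ∀ i, ∀ j ∈ Finset.univ.erase i,
      (fun a => x (i, a) - sgnM (A i j) * x (j, a)) ⬝ᵥ
          absM (A i j) *ᵥ (fun a => x (i, a) - sgnM (A i j) * x (j, a)) =
        y i ⬝ᵥ absM (A i j) *ᵥ y i + y j ⬝ᵥ absM (A i j) *ᵥ y j -
          2 * (y i ⬝ᵥ A i j *ᵥ y j) := fun i j hj =>
    dotProduct_absM_mulVec_sub_sgnM_smul (hsymm i j (Finset.ne_of_mem_erase hj).symm) _ _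
  have hswap : ∑ i, ∑ j ∈ Finset.univ.erase i, y j ⬝ᵥ absM (A i j) *ᵥ y j =
      ∑ i, ∑ j ∈ Finset.univ.erase i, y i ⬝ᵥ absM (A i j) *ᵥ y i := by
    rw [sum_sum_erase_comm]
    refine Finset.sum_congr rfl fun i _ => Finset.sum_congr rfl fun j hj => ?_
    rw [hund j i (Finset.ne_of_mem_erase hj)]
  rw [dotProduct_lap_mulVec, Finset.sum_congr rfl fun i _ => Finset.sum_congr rfl (hedge i)]
  simp only [Finset.sum_sub_distrib, Finset.sum_add_distrib, ← Finset.mul_sum, hswap]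
  ring

lemma lap_posSemidef (hA : SignedWeights A) (hund : ∀ i j : Fin N, i ≠ j → A i j = A j i) :
    (Lap A).PosSemidef := by
  refine .of_dotProduct_mulVec_nonneg (lap_isSymm A hA hund) fun x => ?_
  rw [star_trivial, dotProduct_lap_mulVec_eq_half_sum A (fun i j h => (hA i j h).1) hund]
  refine mul_nonneg (by norm_num) (Finset.sum_nonneg fun i _ => Finset.sum_nonneg fun j hj => ?_)
  exact (absM_posSemidef (hA i j (Finset.ne_of_mem_erase hj).symm).2).dotProduct_mulVec_nonneg _

end Laplacian

theorem stmt7_general (N d : ℕ)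
    (A : Fin N → Fin N → Matrix (Fin d) (Fin d) ℝ) (hA : SignedWeights A)
    (hund : ∀ i j : Fin N, i ≠ j → A i j = A j i) :
    (∀ x : Fin N × Fin d → ℝ,
      x ⬝ᵥ (Lap A).mulVec x =
        (1 / 2 : ℝ) * ∑ i : Fin N, ∑ j ∈ Finset.univ.erase i,
          (fun a => x (i, a) - sgnM (A i j) * x (j, a)) ⬝ᵥ
            ((absM (A i j)).mulVec fun a => x (i, a) - sgnM (A i j) * x (j, a))) ∧
    (Lap A).PosSemidef :=
  ⟨dotProduct_lap_mulVec_eq_half_sum A (fun i j h => (hA i j h).1) hund,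
    lap_posSemidef A hA hund⟩

/-- (quadratic form of the undirected signed matrix-weighted
Laplacian); in particular `L` is symmetric positive semidefinite. -/
theorem stmt7 (N d : ℕ) (hN : 1 ≤ N) (hd : 1 ≤ d)
    (A : Fin N → Fin N → Matrix (Fin d) (Fin d) ℝ) (hA : SignedWeights A)
    (hund : ∀ i j : Fin N, i ≠ j → A i j = A j i) :
    (∀ x : Fin N × Fin d → ℝ,
      x ⬝ᵥ (Lap A).mulVec x =
        (1 / 2 : ℝ) * ∑ i : Fin N, ∑ j ∈ Finset.univ.erase i,
          (fun a => x (i, a) - sgnM (A i j) * x (j, a)) ⬝ᵥ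
            ((absM (A i j)).mulVec fun a => x (i, a) - sgnM (A i j) * x (j, a))) ∧
    (Lap A).PosSemidef :=
  stmt7_general N d A hA hund
end

section
/- (Exponential decay of switched products.) Let M_1,…,M_p ∈ ℝ^{n×n} be finitely many real matrices such that each symmetric part S_m = (M_m + M_mᵀ)/2 is positive definite. Let α > 0, let (t_k)_{k≥0} be strictly increasing with t_0 = 0 and t_{k+1} − t_k ≥ α for all k, and let σ : ℕ → {1,…,p}. Set Λ = max_{1≤m≤p} exp(−2α λ_min(S_m)). Then Λ < 1, and for every k ≥ 0, every t ∈ [t_k, t_{k+1}), and every v ∈ ℝ^n, ‖ exp(−(t − t_k) M_{σ(k)}) · exp(−(t_k − t_{k−1}) M_{σ(k−1)}) ⋯ exp(−(t_1 − t_0) M_{σ(0)}) v ‖₂² ≤ Λ^k ‖v‖₂². -/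
open Matrix Filter

/-! Along the flow `x' = -M x` one has `d/du ‖x‖² = -2 xᵀ M x = -2 xᵀ S x ≤ -2 λ_min(S) ‖x‖²`,
so `exp (2 λ_min(S) u) ‖x(u)‖²` is nonincreasing and `‖x‖²` decays at least like
`exp (-2 λ_min(S) u)`. Each completed switching interval has length `≥ α` and so contributes
a factor `≤ Λ`, while the current, incomplete one contributes a factor `≤ 1`. -/

/-- The product `exp(−Δt_{k−1} L_{σ(k−1)}) ⋯ exp(−Δt_0 L_{σ(0)})` of the flows of the
switched linear system up to switching instant `t_k` (with `Δt_j = t_{j+1} − t_j`). -/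
noncomputable def switchProd {n M : ℕ} (L : Fin M → Matrix (Fin n) (Fin n) ℝ)
    (σ : ℕ → Fin M) (tk : ℕ → ℝ) : ℕ → Matrix (Fin n) (Fin n) ℝ
  | 0 => 1
  | k + 1 => NormedSpace.exp (-((tk (k + 1) - tk k) • L (σ k))) * switchProd L σ tk k

section Rayleigh

variable {ι : Type*} [Fintype ι] [DecidableEq ι]

lemma Matrix.IsHermitian.iInf_eigenvalues_mul_dotProduct_le {A : Matrix ι ι ℝ}
    (hA : A.IsHermitian) (x : ι → ℝ) :
    (⨅ i, hA.eigenvalues i) * (x ⬝ᵥ x) ≤ x ⬝ᵥ (A *ᵥ x) := by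
  set U : Matrix ι ι ℝ := (hA.eigenvectorUnitary : Matrix ι ι ℝ)
  have hstar : star U = Uᵀ := by rw [star_eq_conjTranspose, conjTranspose_eq_transpose_of_trivial]
  set y := Uᵀ *ᵥ x
  have hU : ∀ z, x ⬝ᵥ (U *ᵥ z) = y ⬝ᵥ z := fun z => by rw [dotProduct_mulVec, ← mulVec_transpose]
  have hUy : U *ᵥ y = x := by
    rw [mulVec_mulVec, ← hstar, mem_unitaryGroup_iff.mp hA.eigenvectorUnitary.2, one_mulVec]
  have hxx : x ⬝ᵥ x = y ⬝ᵥ y := by simpa only [hUy] using hU y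
  have hxAx : x ⬝ᵥ (A *ᵥ x) = ∑ i, hA.eigenvalues i * (y i * y i) := by
    conv_lhs => rw [hA.spectral_theorem, Unitary.conjStarAlgAut_apply]
    rw [← mulVec_mulVec, ← mulVec_mulVec, hstar, hU]
    simp only [dotProduct, mulVec_diagonal, Function.comp_apply, RCLike.ofReal_real_eq_id, id]
    exact Finset.sum_congr rfl fun i _ => by ring
  rw [hxAx, hxx, dotProduct, Finset.mul_sum]
  gcongr with i
  · exact mul_self_nonneg _
  · exact ciInf_le (Set.finite_range _).bddBelow i

lemma Matrix.PosDef.iInf_eigenvalues_pos [Nonempty ι] {A : Matrix ι ι ℝ} (hA : A.PosDef) :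
    0 < ⨅ i, hA.isHermitian.eigenvalues i := by
  obtain ⟨i, hi⟩ := exists_eq_ciInf_of_finite (f := hA.isHermitian.eigenvalues)
  exact hi ▸ hA.eigenvalues_pos i

end Rayleigh

lemma Matrix.dotProduct_mulVec_symmPart {ι : Type*} [Fintype ι] (M : Matrix ι ι ℝ) (x : ι → ℝ) :
    x ⬝ᵥ ((((1 : ℝ) / 2) • (M + Mᵀ)) *ᵥ x) = x ⬝ᵥ (M *ᵥ x) := by
  have hT : x ⬝ᵥ (Mᵀ *ᵥ x) = x ⬝ᵥ (M *ᵥ x) := by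
    rw [mulVec_transpose, dotProduct_mulVec, dotProduct_comm]
  rw [smul_mulVec, dotProduct_smul, add_mulVec, dotProduct_add, hT, smul_eq_mul]
  ring

lemma HasDerivAt.dotProduct {𝕜 ι : Type*} [NontriviallyNormedField 𝕜] [Fintype ι]
    {f g : 𝕜 → ι → 𝕜} {f' g' : ι → 𝕜} {u : 𝕜}
    (hf : HasDerivAt f f' u) (hg : HasDerivAt g g' u) :
    HasDerivAt (fun u => f u ⬝ᵥ g u) (f' ⬝ᵥ g u + f u ⬝ᵥ g') u := by
  have h := HasDerivAt.fun_sum (u := Finset.univ) fun i _ =>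
    (hasDerivAt_pi.1 hf i).mul (hasDerivAt_pi.1 hg i)
  simp only [Finset.sum_add_distrib, Pi.mul_apply] at h
  exact h

lemma Real.iSup_lt_of_finite {ι : Type*} [Finite ι] {f : ι → ℝ} {a : ℝ} (ha : 0 < a)
    (h : ∀ i, f i < a) : ⨆ i, f i < a := by
  cases isEmpty_or_nonempty ι
  · simpa [Real.iSup_of_isEmpty] using ha
  · obtain ⟨i, hi⟩ := exists_eq_ciSup_of_finite (f := f)
    exact hi ▸ h i

lemma antitone_exp_mul_of_hasDerivAt_le {g g' : ℝ → ℝ} {c : ℝ}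
    (hg : ∀ u, HasDerivAt g (g' u) u) (hle : ∀ u, g' u ≤ -c * g u) :
    Antitone fun u => Real.exp (c * u) * g u := by
  refine antitone_of_hasDerivAt_nonpos
    (f' := fun u => Real.exp (c * u) * (c * g u + g' u)) (fun u => ?_) fun u => ?_
  · exact (((hasDerivAt_id' u).const_mul c).exp.mul (hg u)).congr_deriv (by ring)
  · exact mul_nonpos_of_nonneg_of_nonpos (Real.exp_pos _).le (by linarith [hle u])

section MatrixExp

attribute [local instance] Matrix.linftyOpNormedRing Matrix.linftyOpNormedAlgebra

variable {ι : Type*} [Fintype ι] [DecidableEq ι]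

lemma Matrix.hasDerivAt_exp_smul_mulVec {𝕂 : Type*} [RCLike 𝕂] (A : Matrix ι ι 𝕂)
    (v : ι → 𝕂) (u : 𝕂) :
    HasDerivAt (fun u => NormedSpace.exp (u • A) *ᵥ v)
      (A *ᵥ (NormedSpace.exp (u • A) *ᵥ v)) u := by
  let mulVecRight : Matrix ι ι 𝕂 →L[𝕂] (ι → 𝕂) := LinearMap.toContinuousLinearMap
    { toFun := (· *ᵥ v), map_add' := (add_mulVec · · v), map_smul' := (smul_mulVec · · v) }
  rw [mulVec_mulVec]
  exact mulVecRight.hasFDerivAt.comp_hasDerivAt u (hasDerivAt_exp_smul_const' A u)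

lemma Matrix.dotProduct_exp_neg_smul_mulVec_le {M : Matrix ι ι ℝ} {c : ℝ}
    (hM : ∀ x, c * (x ⬝ᵥ x) ≤ x ⬝ᵥ (M *ᵥ x)) {s : ℝ} (hs : 0 ≤ s) (v : ι → ℝ) :
    (NormedSpace.exp (-(s • M)) *ᵥ v) ⬝ᵥ (NormedSpace.exp (-(s • M)) *ᵥ v) ≤
      Real.exp (-(2 * s * c)) * (v ⬝ᵥ v) := by
  set x : ℝ → ι → ℝ := fun u => NormedSpace.exp (u • -M) *ᵥ v
  have hx : ∀ u, HasDerivAt x (-M *ᵥ x u) u := hasDerivAt_exp_smul_mulVec (-M) v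
  have hg : ∀ u, HasDerivAt (fun u => x u ⬝ᵥ x u) (-(2 * (x u ⬝ᵥ (M *ᵥ x u)))) u := fun u => by
    refine ((hx u).dotProduct (hx u)).congr_deriv ?_
    rw [neg_mulVec, neg_dotProduct, dotProduct_neg, dotProduct_comm]
    ring
  have h := antitone_exp_mul_of_hasDerivAt_le hg (c := 2 * c)
    (fun u => by linarith [hM (x u)]) hs
  simp only [x, mul_zero, zero_smul, neg_zero, Real.exp_zero, NormedSpace.exp_zero, one_mulVec,
    one_mul, smul_neg] at h
  rw [show 2 * s * c = 2 * c * s by ring, Real.exp_neg, inv_mul_eq_div,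
    le_div_iff₀ (Real.exp_pos _)]
  linarith [h]

lemma Matrix.dotProduct_exp_neg_smul_mulVec_le_self {M : Matrix ι ι ℝ}
    (hM : ∀ x, 0 ≤ x ⬝ᵥ (M *ᵥ x)) {s : ℝ} (hs : 0 ≤ s) (v : ι → ℝ) :
    (NormedSpace.exp (-(s • M)) *ᵥ v) ⬝ᵥ (NormedSpace.exp (-(s • M)) *ᵥ v) ≤ v ⬝ᵥ v := by
  simpa using dotProduct_exp_neg_smul_mulVec_le (c := 0) (by simpa using hM) hs v

end MatrixExp

lemma switchProd_mulVec_dotProduct_le {n M : ℕ} {L : Fin M → Matrix (Fin n) (Fin n) ℝ}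
    {σ : ℕ → Fin M} {tk : ℕ → ℝ} {c : Fin M → ℝ} {Λ : ℝ}
    (hL : ∀ m x, c m * (x ⬝ᵥ x) ≤ x ⬝ᵥ (L m *ᵥ x)) (htk : Monotone tk)
    (hΛ : ∀ k, Real.exp (-(2 * (tk (k + 1) - tk k) * c (σ k))) ≤ Λ) (k : ℕ) (v : Fin n → ℝ) :
    (switchProd L σ tk k *ᵥ v) ⬝ᵥ (switchProd L σ tk k *ᵥ v) ≤ Λ ^ k * (v ⬝ᵥ v) := by
  induction k with
  | zero => simp [switchProd]
  | succ k ih =>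
    set w := switchProd L σ tk k *ᵥ v
    rw [switchProd, ← mulVec_mulVec, pow_succ', mul_assoc]
    calc _ ≤ Real.exp (-(2 * (tk (k + 1) - tk k) * c (σ k))) * (w ⬝ᵥ w) :=
          dotProduct_exp_neg_smul_mulVec_le (hL (σ k)) (sub_nonneg.2 (htk k.le_succ)) w
      _ ≤ Λ * (Λ ^ k * (v ⬝ᵥ v)) :=
          mul_le_mul (hΛ k) ih (by simpa using dotProduct_self_star_nonneg w)
            ((Real.exp_pos _).le.trans (hΛ k))

theorem stmt13_general (n p : ℕ) (hn : 1 ≤ n)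
    (Ms : Fin p → Matrix (Fin n) (Fin n) ℝ)
    (hPD : ∀ m : Fin p, (((1 : ℝ) / 2) • (Ms m + (Ms m)ᵀ)).PosDef)
    (α : ℝ) (hα : 0 < α)
    (tk : ℕ → ℝ) (hmono : StrictMono tk)
    (hgap : ∀ k, α ≤ tk (k + 1) - tk k)
    (σ : ℕ → Fin p) :
    (⨆ m : Fin p, Real.exp (-(2 * α * ⨅ i, (hPD m).isHermitian.eigenvalues i))) < 1 ∧
    ∀ k : ℕ, ∀ t ∈ Set.Ico (tk k) (tk (k + 1)), ∀ v : Fin n → ℝ,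
      ((NormedSpace.exp (-((t - tk k) • Ms (σ k))) * switchProd Ms σ tk k).mulVec v) ⬝ᵥ
        ((NormedSpace.exp (-((t - tk k) • Ms (σ k))) * switchProd Ms σ tk k).mulVec v) ≤
      (⨆ m : Fin p, Real.exp (-(2 * α * ⨅ i, (hPD m).isHermitian.eigenvalues i))) ^ k *
        (v ⬝ᵥ v) := by
  have : Nonempty (Fin n) := Fin.pos_iff_nonempty.mp hn
  set c : Fin p → ℝ := fun m => ⨅ i, (hPD m).isHermitian.eigenvalues i
  set Λ := ⨆ m, Real.exp (-(2 * α * c m))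
  have hc : ∀ m, 0 < c m := fun m => (hPD m).iInf_eigenvalues_pos
  have hcoer : ∀ m x, c m * (x ⬝ᵥ x) ≤ x ⬝ᵥ (Ms m *ᵥ x) := fun m x => by
    simpa only [dotProduct_mulVec_symmPart] using
      (hPD m).isHermitian.iInf_eigenvalues_mul_dotProduct_le x
  have hΛ : ∀ k, Real.exp (-(2 * (tk (k + 1) - tk k) * c (σ k))) ≤ Λ := fun k =>
    calc _ ≤ Real.exp (-(2 * α * c (σ k))) := by have := hc (σ k); gcongr; exact hgap k
      _ ≤ Λ := le_ciSup (f := fun m => Real.exp (-(2 * α * c m))) (Set.finite_range _).bddAbove _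
  refine ⟨Real.iSup_lt_of_finite one_pos fun m => ?_, fun k t ht v => ?_⟩
  · have := hc m
    exact Real.exp_lt_one_iff.2 (by simp only [neg_lt_zero]; positivity)
  · have hacc : ∀ x, 0 ≤ x ⬝ᵥ (Ms (σ k) *ᵥ x) := fun x =>
      (mul_nonneg (hc _).le (by simpa using dotProduct_self_star_nonneg x)).trans (hcoer _ x)
    rw [← mulVec_mulVec]
    exact (dotProduct_exp_neg_smul_mulVec_le_self hacc (sub_nonneg.2 ht.1) _).trans
      (switchProd_mulVec_dotProduct_le hcoer hmono.monotone hΛ k v)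

/-- exponential decay of switched products: if every symmetric part
`S_m = (M_m + M_mᵀ)/2` is positive definite, then with
`Λ = max_m exp(−2α λ_min(S_m))` one has `Λ < 1` and the squared Euclidean norm of
the switched product applied to any `v` decays like `Λ^k ‖v‖₂²`. -/
theorem stmt13 (n p : ℕ) (hn : 1 ≤ n)
    (Ms : Fin p → Matrix (Fin n) (Fin n) ℝ)
    (hPD : ∀ m : Fin p, (((1 : ℝ) / 2) • (Ms m + (Ms m)ᵀ)).PosDef)
    (α : ℝ) (hα : 0 < α)
    (tk : ℕ → ℝ) (htk0 : tk 0 = 0) (hmono : StrictMono tk)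
    (hgap : ∀ k, α ≤ tk (k + 1) - tk k)
    (σ : ℕ → Fin p) :
    (⨆ m : Fin p, Real.exp (-(2 * α * ⨅ i, (hPD m).isHermitian.eigenvalues i))) < 1 ∧
    ∀ k : ℕ, ∀ t ∈ Set.Ico (tk k) (tk (k + 1)), ∀ v : Fin n → ℝ,
      ((NormedSpace.exp (-((t - tk k) • Ms (σ k))) * switchProd Ms σ tk k).mulVec v) ⬝ᵥ
        ((NormedSpace.exp (-((t - tk k) • Ms (σ k))) * switchProd Ms σ tk k).mulVec v) ≤
      (⨆ m : Fin p, Real.exp (-(2 * α * ⨅ i, (hPD m).isHermitian.eigenvalues i))) ^ k *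
        (v ⬝ᵥ v) :=
  stmt13_general n p hn Ms hPD α hα tk hmono hgap σ
end

section
/- (Null space of the augmented grounded Laplacian under the design.) Let A_{ij} be a signed matrix-weight assignment on N vertices satisfying Assumption 1 with partition V1 ∪ V2, and suppose Σ_{j∈Ω_i}|A_{ij}| is positive definite for every i ∈ V1, where Ω_i = {j : A_{ij} is negative semidefinite and nonzero}. Choose δ > max(0, max_{i∈V1} (1/2) λ_max[ (Σ_{j∈Ω_i}|A_{ij}|)⁻¹ ( Σ_{j∈N'_i}|A_{ji}| − Σ_{j∈N_i}|A_{ij}| ) ]) and apply the design: δ_i = δ for i with Ω_i ≠ ∅ and δ_i = 0 otherwise; B_i = Σ_{j∈Ω_i}|A_{ij}| for such i and B_i = 0 otherwise. Let L_B = L + blockdiag(δ_1 B_1,…,δ_N B_N) and let Δ_B ∈ ℝ^{Nd×d} be the block column stacking δ_1 B_1,…,δ_N B_N. Then the set {(u, w) ∈ ℝ^{Nd} × ℝ^d : L_B u = Δ_B w} (the null space of the augmented Laplacian L̂ with blocks [[L_B, −Δ_B],[0, 0]]) equals { (1_N ⊗ θ', (1 + 2/δ) θ') : θ' ∈ ℝ^d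 }; in particular it is a d-dimensional subspace of ℝ^{Nd+d}. -/
open Matrix Filter
open scoped Classical

/-!
Under the design `δ_i B_i = δ B_i` at every vertex, and the `i`-th block of `L (1_N ⊗ θ)` is
`(inDeg_i - Σ_j A_ij) θ = 2 B_i θ`, so `(1_N ⊗ θ, (1 + 2/δ) θ)` solves `L_B u = Δ_B w`.
Conversely it suffices that `L_B` is nonsingular. Twice its quadratic form splits into edge terms
`(x_i ∓ x_j)ᵀ |A_ij| (x_i ∓ x_j) ≥ 0` and vertex terms `x_iᵀ (inDeg_i - outDeg_i + 2δ B_i) x_i`.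
The vertex terms are nonnegative on `V2` by in-degree dominance, and positive definite on `V1`
by the choice of `δ`: conjugating by `B_i^{-1/2}` turns the bound on the spectrum of
`B_i⁻¹ (outDeg_i - inDeg_i)` into a bound on a symmetric matrix. Hence a kernel vector vanishes
on `V1`, and the vanishing edge terms propagate this along positive–negative paths to `V2`.
-/

namespace Matrix

open scoped ComplexOrder MatrixOrder in
theorem PosSemidef.eq_zero_of_neg {n 𝕜 : Type*} [RCLike 𝕜] {M : Matrix n n 𝕜}
    (hM : M.PosSemidef) (hM' : (-M).PosSemidef) : M = 0 :=
  le_antisymm (by rwa [le_iff, zero_sub]) hM.nonneg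

theorem PosDef.eq_zero_of_dotProduct_mulVec_self {n : Type*} [Fintype n] {M : Matrix n n ℝ}
    (hM : M.PosDef) {v : n → ℝ} (hv : v ⬝ᵥ M *ᵥ v = 0) : v = 0 := by
  by_contra hne
  simpa [hv] using hM.dotProduct_mulVec_pos hne

theorem IsSymm.dotProduct_mulVec_comm {n R : Type*} [Fintype n] [CommSemiring R]
    {M : Matrix n n R} (hM : M.IsSymm) (v w : n → R) : v ⬝ᵥ M *ᵥ w = w ⬝ᵥ M *ᵥ v := by
  rw [dotProduct_mulVec, ← mulVec_transpose, hM.eq, dotProduct_comm]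

theorem dotProduct_uncurry {ι κ R : Type*} [Fintype ι] [Fintype κ]
    [NonUnitalNonAssocSemiring R] (X Y : ι → κ → R) :
    Function.uncurry X ⬝ᵥ Function.uncurry Y = ∑ i, X i ⬝ᵥ Y i := by
  simp [dotProduct, Fintype.sum_prod_type]

open scoped MatrixOrder in
theorem PosDef.posDef_smul_sub_of_isRoot_charpoly_lt {n : Type*} [Fintype n] [DecidableEq n]
    {B S : Matrix n n ℝ} (hB : B.PosDef) (hS : S.IsHermitian) {c : ℝ}
    (h : ∀ μ, (B⁻¹ * S).charpoly.IsRoot μ → μ < c) : (c • B - S).PosDef := by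
  set C := CFC.sqrt B
  have hCC : C * C = B := CFC.sqrt_mul_sqrt_self B hB.posSemidef.nonneg
  have hC : IsUnit C.det := (isUnit_iff_isUnit_det C).mp
    (CFC.isUnit_sqrt_iff_isStrictlyPositive.mpr hB.isStrictlyPositive)
  have hCinv : star C⁻¹ = C⁻¹ := by
    rw [star_eq_conjTranspose, conjTranspose_nonsing_inv,
      (CFC.sqrt_nonneg B).posSemidef.isHermitian.eq]
  set T := C⁻¹ * S * C⁻¹
  have hconj : star C⁻¹ * (c • B - S) * C⁻¹ = algebraMap ℝ _ c - T := by
    rw [hCinv, ← hCC, mul_sub, sub_mul, Matrix.mul_smul, Matrix.smul_mul, ← mul_assoc,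
      nonsing_inv_mul _ hC, one_mul, mul_nonsing_inv _ hC, Algebra.algebraMap_eq_smul_one]
  have hT : IsSelfAdjoint (algebraMap ℝ _ c - T) := by
    refine (IsSelfAdjoint.algebraMap _ (.all c)).sub ?_
    simpa only [hCinv] using hS.isSelfAdjoint.conjugate' C⁻¹
  have hcharpoly : T.charpoly = (B⁻¹ * S).charpoly := by
    rw [charpoly_mul_comm, ← mul_assoc, ← hCC, mul_inv_rev]
  have hCinv_unit : IsUnit C⁻¹ := (isUnit_iff_isUnit_det _).mpr (isUnit_nonsing_inv_det C hC)
  rw [← hCinv_unit.posDef_star_left_conjugate_iff, hconj, ← isStrictlyPositive_iff_posDef,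
    StarOrderedRing.isStrictlyPositive_iff_spectrum_pos (R := ℝ) _ hT, ← spectrum.singleton_sub_eq]
  rintro _ ⟨_, rfl, μ, hμ, rfl⟩
  rw [mem_spectrum_iff_isRoot_charpoly, hcharpoly] at hμ
  exact sub_pos.mpr (h μ hμ)

end Matrix

section AbsM

variable {d : ℕ} {M : Matrix (Fin d) (Fin d) ℝ}

theorem absM_of_posSemidef (hM : M.PosSemidef) : absM M = M := if_pos hM

theorem absM_of_neg_posSemidef (hM : (-M).PosSemidef) : absM M = -M := by
  by_cases h : M.PosSemidef
  · rw [absM_of_posSemidef h, h.eq_zero_of_neg hM, neg_zero]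
  · exact if_neg h

theorem absM_posSemidef_s15 (hM : M.PosSemidef ∨ (-M).PosSemidef) : (absM M).PosSemidef := by
  rcases hM with hM | hM
  · rwa [absM_of_posSemidef hM]
  · rwa [absM_of_neg_posSemidef hM]

theorem absM_posDef (hM : M.PosDef ∨ (-M).PosDef) : (absM M).PosDef := by
  rcases hM with hM | hM
  · rwa [absM_of_posSemidef hM.posSemidef]
  · rwa [absM_of_neg_posSemidef hM.posSemidef]

/-- The contribution of an edge with weight `M` to the Laplacian quadratic form; it equals
`(v - w)ᵀ |M| (v - w)` or `(v + w)ᵀ |M| (v + w)` according to the sign of `M`. -/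
noncomputable def edgeEnergy (M : Matrix (Fin d) (Fin d) ℝ) (v w : Fin d → ℝ) : ℝ :=
  v ⬝ᵥ absM M *ᵥ v + w ⬝ᵥ absM M *ᵥ w - 2 * (v ⬝ᵥ M *ᵥ w)

theorem edgeEnergy_nonneg (hM : M.IsSymm) (hM' : M.PosSemidef ∨ (-M).PosSemidef)
    (v w : Fin d → ℝ) : 0 ≤ edgeEnergy M v w := by
  rcases hM' with hM' | hM'
  · have := hM'.dotProduct_mulVec_nonneg (v - w)
    simp only [star_trivial, mulVec_sub, sub_dotProduct, dotProduct_sub,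
      hM.dotProduct_mulVec_comm w v] at this
    rw [edgeEnergy, absM_of_posSemidef hM']
    linarith
  · have := hM'.dotProduct_mulVec_nonneg (v + w)
    simp only [star_trivial, mulVec_add, add_dotProduct, dotProduct_add, neg_mulVec,
      dotProduct_neg, hM.dotProduct_mulVec_comm w v] at this
    rw [edgeEnergy, absM_of_neg_posSemidef hM']
    simp only [neg_mulVec, dotProduct_neg]
    linarith

theorem edgeEnergy_zero_right (M : Matrix (Fin d) (Fin d) ℝ) (v : Fin d → ℝ) :
    edgeEnergy M v 0 = v ⬝ᵥ absM M *ᵥ v := by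
  simp [edgeEnergy]

end AbsM

section Laplacian

variable {N d : ℕ}

theorem Lap_mulVec_uncurry (A : Fin N → Fin N → Matrix (Fin d) (Fin d) ℝ)
    (X : Fin N → Fin d → ℝ) :
    Lap A *ᵥ Function.uncurry X
      = Function.uncurry fun i => inDeg A i *ᵥ X i - ∑ j ∈ Finset.univ.erase i, A i j *ᵥ X j := by
  ext ⟨i, a⟩
  simp only [mulVec, dotProduct, Fintype.sum_prod_type, Function.uncurry_apply_pair]
  rw [← Finset.add_sum_erase _ _ (Finset.mem_univ i)]
  congr 1
  · simp [Lap, inDeg, mulVec, dotProduct]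
  · rw [Finset.sum_apply, ← Finset.sum_neg_distrib]
    refine Finset.sum_congr rfl fun j hj => ?_
    simp [Lap, Ne.symm (Finset.ne_of_mem_erase hj), mulVec, dotProduct]

theorem blockDiag'_mulVec_uncurry (D : Fin N → Matrix (Fin d) (Fin d) ℝ)
    (X : Fin N → Fin d → ℝ) :
    blockDiag' D *ᵥ Function.uncurry X = Function.uncurry fun i => D i *ᵥ X i := by
  ext ⟨i, a⟩
  simp only [mulVec, dotProduct, Fintype.sum_prod_type, Function.uncurry_apply_pair]
  rw [Fintype.sum_eq_single i fun j hj => by simp [_root_.blockDiag', Ne.symm hj]]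
  simp [_root_.blockDiag']

theorem two_mul_dotProduct_Lap_add_blockDiag'_mulVec
    (A : Fin N → Fin N → Matrix (Fin d) (Fin d) ℝ) (D : Fin N → Matrix (Fin d) (Fin d) ℝ)
    (X : Fin N → Fin d → ℝ) :
    2 * (Function.uncurry X ⬝ᵥ (Lap A + blockDiag' D) *ᵥ Function.uncurry X)
      = ∑ i, ∑ j ∈ Finset.univ.erase i, edgeEnergy (A i j) (X i) (X j)
        + ∑ i, X i ⬝ᵥ (inDeg A i - outDeg A i + (2 : ℝ) • D i) *ᵥ X i := by
  have hout : ∑ i, X i ⬝ᵥ outDeg A i *ᵥ X i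
      = ∑ i, ∑ j ∈ Finset.univ.erase i, X j ⬝ᵥ absM (A i j) *ᵥ X j := by
    simp only [outDeg, sum_mulVec, dotProduct_sum]
    exact Finset.sum_comm' fun i j => by simp [and_comm, eq_comm]
  rw [add_mulVec, Lap_mulVec_uncurry, blockDiag'_mulVec_uncurry, dotProduct_add,
    dotProduct_uncurry, dotProduct_uncurry]
  simp only [edgeEnergy, add_mulVec, sub_mulVec, smul_mulVec, dotProduct_add, dotProduct_sub,
    dotProduct_smul, Finset.sum_add_distrib, Finset.sum_sub_distrib, hout]
  simp only [inDeg, sum_mulVec, dotProduct_sum, smul_eq_mul, ← Finset.mul_sum]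
  ring

/-- The design matrix `B_i = Σ_{j ∈ Ω_i} |A_ij|`. -/
noncomputable def negDeg (A : Fin N → Fin N → Matrix (Fin d) (Fin d) ℝ) (i : Fin N) :
    Matrix (Fin d) (Fin d) ℝ :=
  ∑ j ∈ OmegaSet A i, absM (A i j)

variable {A : Fin N → Fin N → Matrix (Fin d) (Fin d) ℝ}

theorem SignedWeights.absM_posSemidef (hA : SignedWeights A) {i j : Fin N} (hij : i ≠ j) :
    (absM (A i j)).PosSemidef :=
  _root_.absM_posSemidef_s15 (hA i j hij).2

theorem inDeg_posSemidef (hA : SignedWeights A) (i : Fin N) : (inDeg A i).PosSemidef :=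
  posSemidef_sum _ fun _ hj => hA.absM_posSemidef (Finset.ne_of_mem_erase hj).symm

theorem outDeg_posSemidef (hA : SignedWeights A) (i : Fin N) : (outDeg A i).PosSemidef :=
  posSemidef_sum _ fun _ hj => hA.absM_posSemidef (Finset.ne_of_mem_erase hj)

theorem negDeg_posSemidef (hA : SignedWeights A) (i : Fin N) : (negDeg A i).PosSemidef :=
  posSemidef_sum _ fun _ hj =>
    hA.absM_posSemidef (Finset.ne_of_mem_erase (Finset.mem_of_mem_filter _ hj)).symm

theorem inDeg_sub_sum_eq_two_smul_negDeg (hA : SignedWeights A) (i : Fin N) :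
    inDeg A i - ∑ j ∈ Finset.univ.erase i, A i j = (2 : ℝ) • negDeg A i := by
  rw [inDeg, negDeg, ← Finset.sum_sub_distrib, Finset.smul_sum, OmegaSet,
    ← Finset.sum_filter_of_ne (p := fun j => (-(A i j)).PosSemidef ∧ A i j ≠ 0)]
  · refine Finset.sum_congr rfl fun j hj => ?_
    rw [absM_of_neg_posSemidef (Finset.mem_filter.mp hj).2.1, two_smul, sub_eq_add_neg]
  · intro j hj hne
    have hpsd : ¬ (A i j).PosSemidef := fun h => hne (by rw [absM_of_posSemidef h, sub_self])
    exact ⟨((hA i j (Finset.ne_of_mem_erase hj).symm).2).resolve_left hpsd,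
      fun h0 => hpsd (h0 ▸ .zero)⟩

theorem Lap_mulVec_const (hA : SignedWeights A) (θ : Fin d → ℝ) :
    Lap A *ᵥ Function.uncurry (fun _ => θ)
      = Function.uncurry fun i => (2 : ℝ) • negDeg A i *ᵥ θ := by
  rw [Lap_mulVec_uncurry]
  simp only [← sum_mulVec, ← sub_mulVec, inDeg_sub_sum_eq_two_smul_negDeg hA, smul_mulVec]

theorem Lap_add_blockDiag'_mulVec_const (hA : SignedWeights A) {δ : ℝ} (hδ : δ ≠ 0)
    (θ : Fin d → ℝ) :
    (Lap A + blockDiag' fun i => δ • negDeg A i) *ᵥ (fun p => θ p.2)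
      = fun p => ((δ • negDeg A p.1) *ᵥ ((1 + 2 / δ) • θ)) p.2 := by
  rw [show (fun p : Fin N × Fin d => θ p.2) = Function.uncurry fun _ => θ from rfl, add_mulVec,
    Lap_mulVec_const hA, blockDiag'_mulVec_uncurry]
  have hsplit (M : Matrix (Fin d) (Fin d) ℝ) :
      (δ • M) *ᵥ ((1 + 2 / δ) • θ) = (2 : ℝ) • M *ᵥ θ + (δ • M) *ᵥ θ := by
    rw [mulVec_smul, smul_mulVec, smul_smul, add_mul, one_mul, div_mul_cancel₀ 2 hδ, add_smul,
      add_comm]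
  ext ⟨i, a⟩
  rw [hsplit]
  rfl

theorem ite_smul_negDeg (δ : ℝ) (i : Fin N) :
    (if (OmegaSet A i).Nonempty then δ else 0) • negDeg A i = δ • negDeg A i := by
  split_ifs with hΩ
  · rfl
  · rw [negDeg, Finset.not_nonempty_iff_eq_empty.mp hΩ, Finset.sum_empty, smul_zero, smul_zero]

theorem posDef_inDeg_sub_outDeg_add_smul_negDeg (hA : SignedWeights A) {δ : ℝ} {i : Fin N}
    (hPD : (negDeg A i).PosDef)
    (hδ : ∀ μ, ((negDeg A i)⁻¹ * (outDeg A i - inDeg A i)).charpoly.IsRoot μ → μ / 2 < δ) :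
    (inDeg A i - outDeg A i + (2 : ℝ) • δ • negDeg A i).PosDef := by
  have := hPD.posDef_smul_sub_of_isRoot_charpoly_lt (c := 2 * δ)
    ((outDeg_posSemidef hA i).isHermitian.sub (inDeg_posSemidef hA i).isHermitian)
    fun μ hμ => by linarith [hδ μ hμ]
  rw [smul_smul]
  convert this using 1
  abel

theorem PNPath.eq_zero {X : Fin N → Fin d → ℝ}
    (hX : ∀ i j, i ≠ j → edgeEnergy (A i j) (X i) (X j) = 0) {i j : Fin N}
    (hij : PNPath A i j) (hi : X i = 0) : X j = 0 := by
  obtain ⟨m, -, p, rfl, rfl, hstep⟩ := hij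
  suffices ∀ s, X (p s) = 0 from this (Fin.last m)
  intro s
  induction s using Fin.induction with
  | zero => exact hi
  | succ s ih =>
    by_cases hs : p s.succ = p s.castSucc
    · rwa [hs]
    · have hedge := hX _ _ hs
      rw [ih, edgeEnergy_zero_right] at hedge
      exact (absM_posDef (hstep s)).eq_zero_of_dotProduct_mulVec_self hedge

theorem eq_zero_of_Lap_add_blockDiag'_mulVec_eq_zero (hA : SignedWeights A)
    {V1 V2 : Finset (Fin N)} (hAss : Assumption1 A V1 V2)
    {D : Fin N → Matrix (Fin d) (Fin d) ℝ} (hD : ∀ i, (D i).PosSemidef)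
    (hV1 : ∀ i ∈ V1, (inDeg A i - outDeg A i + (2 : ℝ) • D i).PosDef)
    {x : Fin N × Fin d → ℝ} (hx : (Lap A + blockDiag' D) *ᵥ x = 0) : x = 0 := by
  obtain ⟨hcover, -, hpath, hdom⟩ := hAss
  have hV2 : ∀ i ∉ V1, i ∈ V2 := fun i hi =>
    (Finset.mem_union.mp (hcover ▸ Finset.mem_univ i)).resolve_left hi
  set X := Function.curry x
  have hedge : ∀ i, ∀ j ∈ Finset.univ.erase i, 0 ≤ edgeEnergy (A i j) (X i) (X j) :=
    fun i j hj =>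
      have hAij := hA i j (Finset.ne_of_mem_erase hj).symm
      edgeEnergy_nonneg hAij.1 hAij.2 _ _
  have hvertex : ∀ i, 0 ≤ X i ⬝ᵥ (inDeg A i - outDeg A i + (2 : ℝ) • D i) *ᵥ X i := by
    intro i
    by_cases hi : i ∈ V1
    · simpa using (hV1 i hi).posSemidef.dotProduct_mulVec_nonneg (X i)
    · simpa using
        ((hdom i (hV2 i hi)).add ((hD i).smul zero_le_two)).dotProduct_mulVec_nonneg (X i)
  have hsum := two_mul_dotProduct_Lap_add_blockDiag'_mulVec A D X
  rw [Function.uncurry_curry, hx, dotProduct_zero, mul_zero, eq_comm,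
    add_eq_zero_iff_of_nonneg (Finset.sum_nonneg fun i _ => Finset.sum_nonneg (hedge i))
      (Finset.sum_nonneg fun i _ => hvertex i),
    Finset.sum_eq_zero_iff_of_nonneg fun i _ => Finset.sum_nonneg (hedge i),
    Finset.sum_eq_zero_iff_of_nonneg fun i _ => hvertex i] at hsum
  obtain ⟨hedge0, hvertex0⟩ := hsum
  have hE : ∀ i j, i ≠ j → edgeEnergy (A i j) (X i) (X j) = 0 := fun i j hij =>
    (Finset.sum_eq_zero_iff_of_nonneg (hedge i)).mp (hedge0 i (Finset.mem_univ i)) j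
      (Finset.mem_erase.mpr ⟨hij.symm, Finset.mem_univ j⟩)
  have hXV1 : ∀ i ∈ V1, X i = 0 := fun i hi =>
    (hV1 i hi).eq_zero_of_dotProduct_mulVec_self (hvertex0 i (Finset.mem_univ i))
  have hX : ∀ j, X j = 0 := by
    intro j
    by_cases hj : j ∈ V1
    · exact hXV1 j hj
    · obtain ⟨i, hi, hij⟩ := hpath j (hV2 j hj)
      exact hij.eq_zero hE (hXV1 i hi)
  ext ⟨i, a⟩
  exact congrFun (hX i) a

end Laplacian

theorem stmt15_general (N d : ℕ)
    (A : Fin N → Fin N → Matrix (Fin d) (Fin d) ℝ) (hA : SignedWeights A)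
    (V1 V2 : Finset (Fin N)) (hAss : Assumption1 A V1 V2)
    (hPD : ∀ i ∈ V1, (∑ j ∈ OmegaSet A i, absM (A i j)).PosDef)
    (δ : ℝ) (hδ : 0 < δ)
    (hδC : ∀ i ∈ V1, ∀ μ : ℝ,
      (((∑ j ∈ OmegaSet A i, absM (A i j))⁻¹ *
        (outDeg A i - inDeg A i)).charpoly).IsRoot μ → μ / 2 < δ)
    (δi : Fin N → ℝ) (hδi : ∀ i, δi i = if (OmegaSet A i).Nonempty then δ else 0)
    (B : Fin N → Matrix (Fin d) (Fin d) ℝ)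
    (hB : ∀ i, B i = ∑ j ∈ OmegaSet A i, absM (A i j))
    (LB : Matrix (Fin N × Fin d) (Fin N × Fin d) ℝ)
    (hLB : LB = Lap A + blockDiag' fun i => δi i • B i) :
    {uw : (Fin N × Fin d → ℝ) × (Fin d → ℝ) |
        LB.mulVec uw.1 = fun p => ((δi p.1 • B p.1).mulVec uw.2) p.2} =
      {uw : (Fin N × Fin d → ℝ) × (Fin d → ℝ) |
        ∃ θ' : Fin d → ℝ, uw.1 = (fun p => θ' p.2) ∧ uw.2 = (1 + 2 / δ) • θ'} := by
  obtain rfl : B = negDeg A := funext hB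
  have hδB : ∀ i, δi i • negDeg A i = δ • negDeg A i := fun i => by rw [hδi, ite_smul_negDeg]
  have hV1 : ∀ i ∈ V1, (inDeg A i - outDeg A i + (2 : ℝ) • δ • negDeg A i).PosDef := fun i hi =>
    posDef_inDeg_sub_outDeg_add_smul_negDeg hA (hPD i hi) (hδC i hi)
  have hconst := Lap_add_blockDiag'_mulVec_const hA hδ.ne'
  subst hLB
  simp only [hδB]
  ext ⟨u, w⟩
  simp only [Set.mem_ofPred_eq]
  constructor
  · intro h
    have hw : (1 + 2 / δ) • (1 + 2 / δ)⁻¹ • w = w := smul_inv_smul₀ (by positivity) w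
    refine ⟨(1 + 2 / δ)⁻¹ • w, ?_, hw.symm⟩
    rw [← sub_eq_zero]
    refine eq_zero_of_Lap_add_blockDiag'_mulVec_eq_zero hA hAss
      (fun i => (negDeg_posSemidef hA i).smul hδ.le) hV1 ?_
    rw [mulVec_sub, h, hconst, hw, sub_self]
  · rintro ⟨θ, rfl, rfl⟩
    exact hconst θ

/-- null space of the augmented grounded Laplacian under the
design: the solution set of `L_B u = Δ_B w` (i.e. the null space of the augmented
Laplacian `[[L_B, −Δ_B],[0,0]]`) is exactly
`{(1_N ⊗ θ', (1 + 2/δ)θ') : θ' ∈ ℝ^d}`. The bound `δ > max(0, max_{i∈V1} C_i)` is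
expressed by `δ > 0` together with `δ > μ/2` for every (real) eigenvalue `μ` of the
indicated matrices, all of whose eigenvalues are real. -/
theorem stmt15 (N d : ℕ) (hN : 1 ≤ N) (hd : 1 ≤ d)
    (A : Fin N → Fin N → Matrix (Fin d) (Fin d) ℝ) (hA : SignedWeights A)
    (V1 V2 : Finset (Fin N)) (hAss : Assumption1 A V1 V2)
    (hPD : ∀ i ∈ V1, (∑ j ∈ OmegaSet A i, absM (A i j)).PosDef)
    (δ : ℝ) (hδ : 0 < δ)
    (hδC : ∀ i ∈ V1, ∀ μ : ℝ,
      (((∑ j ∈ OmegaSet A i, absM (A i j))⁻¹ *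
        (outDeg A i - inDeg A i)).charpoly).IsRoot μ → μ / 2 < δ)
    (δi : Fin N → ℝ) (hδi : ∀ i, δi i = if (OmegaSet A i).Nonempty then δ else 0)
    (B : Fin N → Matrix (Fin d) (Fin d) ℝ)
    (hB : ∀ i, B i = ∑ j ∈ OmegaSet A i, absM (A i j))
    (LB : Matrix (Fin N × Fin d) (Fin N × Fin d) ℝ)
    (hLB : LB = Lap A + blockDiag' fun i => δi i • B i) :
    {uw : (Fin N × Fin d → ℝ) × (Fin d → ℝ) |
        LB.mulVec uw.1 = fun p => ((δi p.1 • B p.1).mulVec uw.2) p.2} =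
      {uw : (Fin N × Fin d → ℝ) × (Fin d → ℝ) |
        ∃ θ' : Fin d → ℝ, uw.1 = (fun p => θ' p.2) ∧ uw.2 = (1 + 2 / δ) • θ'} :=
  stmt15_general N d A hA V1 V2 hAss hPD δ hδ hδC δi hδi B hB LB hLB
end
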